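/- arXiv:1603.02840 — 5 statements merged into one kernel-verified Lean document; each statement's English description precedes it below -/
import Mathlib

section
/- Let (E,‖·‖) be a complex Banach space, p, q positive integers and s ≥ 0. A formal power series f̂ ∈ E[[x₁,x₂]] is s-Gevrey in the monomial x₁^p x₂^q if and only if f̂∘π₁ is s-Gevrey in the monomial x₁^p x₂^{p+q} and f̂∘π₂ is s-Gevrey in the monomial x₁^{p+q} x₂^q. -/
open Filter
open scoped Topology

noncomputable section

variable {E : Type*} [NormedAddCommGroup E] [NormedSpace ℂ E] [CompleteSpace E]

/-- A formal power series `Σ a n m x₁^n x₂^m ∈ E[[x₁,x₂]]` (given by its coefficients) is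
convergent if `Σ ‖a n m‖ ρ^(n+m) < ∞` for some `ρ > 0`. -/
def PSConvergent (a : ℕ → ℕ → E) : Prop :=
  ∃ ρ : ℝ, 0 < ρ ∧ Summable fun nm : ℕ × ℕ => ‖a nm.1 nm.2‖ * ρ ^ (nm.1 + nm.2)

/-- `s`-Gevrey in the monomial `x₁^p x₂^q` (coefficient characterization). -/
def MonomialGevrey (s : ℝ) (p q : ℕ) (a : ℕ → ℕ → E) : Prop :=
  ∃ C A : ℝ, 0 < C ∧ 0 < A ∧ ∀ n m : ℕ,
    ‖a n m‖ ≤ C * A ^ (n + m) *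
      min ((n.factorial : ℝ) ^ (s / (p : ℝ))) ((m.factorial : ℝ) ^ (s / (q : ℝ)))

/-- The index set `{(m,j) | m < p ∨ j < q}` of the `(p,q)`-coefficient functions. -/
def coeffIndex (p q : ℕ) : Set (ℕ × ℕ) := {mj | mj.1 < p ∨ mj.2 < q}

/-- The `(p,q)`-coefficient function `f_n(x₁,x₂) = Σ_{(m,j) : m<p ∨ j<q} a_{np+m,nq+j} x₁^m x₂^j`. -/
def coeffFn (a : ℕ → ℕ → E) (p q n : ℕ) (x : ℂ × ℂ) : E :=
  ∑' mj : coeffIndex p q, (x.1 ^ mj.1.1 * x.2 ^ mj.1.2) • a (n * p + mj.1.1) (n * q + mj.1.2)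

/-- All the `(p,q)`-coefficient functions of `a` converge and define bounded holomorphic
maps on the polydisk of radius `r`. -/
def CoeffFnGood (a : ℕ → ℕ → E) (p q : ℕ) (r : ℝ) : Prop :=
  ∀ n : ℕ,
    (∀ x : ℂ × ℂ, ‖x.1‖ < r → ‖x.2‖ < r →
      Summable fun mj : coeffIndex p q =>
        (x.1 ^ mj.1.1 * x.2 ^ mj.1.2) • a (n * p + mj.1.1) (n * q + mj.1.2)) ∧
    DifferentiableOn ℂ (coeffFn a p q n)
      {x : ℂ × ℂ | ‖x.1‖ < r ∧ ‖x.2‖ < r} ∧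
    ∃ M : ℝ, ∀ x : ℂ × ℂ, ‖x.1‖ < r → ‖x.2‖ < r → ‖coeffFn a p q n x‖ ≤ M

/-- The monomial sector `Π_{p,q}(a,b,r)`. -/
def MSector (p q : ℕ) (a b r : ℝ) : Set (ℂ × ℂ) :=
  {x | x.1 ≠ 0 ∧ x.2 ≠ 0 ∧ ‖x.1‖ ^ p < r ∧ ‖x.2‖ ^ q < r ∧
    ∃ θ : ℝ, a < θ ∧ θ < b ∧
      x.1 ^ p * x.2 ^ q = (‖x.1 ^ p * x.2 ^ q‖ : ℂ) * Complex.exp (θ * Complex.I)}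

/-- `f` has the series `a` as `s`-Gevrey asymptotic expansion in `x₁^p x₂^q` on the
monomial sector `Π_{p,q}(a₀,b₀,r)`. -/
def HasMAsymp (a : ℕ → ℕ → E) (s : ℝ) (p q : ℕ) (f : ℂ × ℂ → E) (a₀ b₀ r : ℝ) : Prop :=
  ∃ r' : ℝ, 0 < r' ∧ r' ≤ r ∧ CoeffFnGood a p q r' ∧
    ∀ a' b' ρ : ℝ, a₀ < a' → a' < b' → b' < b₀ → 0 < ρ → ρ < r' →
      ∃ C A : ℝ, 0 < C ∧ 0 < A ∧ ∀ N : ℕ, ∀ x ∈ MSector p q a' b' ρ,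
        ‖f x - ∑ n ∈ Finset.range N, (x.1 ^ p * x.2 ^ q) ^ n • coeffFn a p q n x‖ ≤
          C * A ^ N * (N.factorial : ℝ) ^ s * ‖x.1 ^ p * x.2 ^ q‖ ^ N

/-- `f` is a `k`-sum of the series `a` in the monomial `x₁^p x₂^q` in direction `d` :
it is holomorphic on a monomial sector bisected by `d` of opening `> π/k` and has `a`
as `(1/k)`-Gevrey asymptotic expansion in `x₁^p x₂^q` there. -/
def IsMSum (a : ℕ → ℕ → E) (k : ℝ) (p q : ℕ) (d : ℝ) (f : ℂ × ℂ → E) : Prop :=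
  ∃ a₀ b₀ r : ℝ, Real.pi / k < b₀ - a₀ ∧ d = (a₀ + b₀) / 2 ∧ 0 < r ∧
    DifferentiableOn ℂ f (MSector p q a₀ b₀ r) ∧ HasMAsymp a (1 / k) p q f a₀ b₀ r

/-- `k`-summability in the monomial `x₁^p x₂^q` in direction `d`. -/
def MSummableDir (a : ℕ → ℕ → E) (k : ℝ) (p q : ℕ) (d : ℝ) : Prop :=
  ∃ f : ℂ × ℂ → E, IsMSum a k p q d f

/-- `k`-summability in the monomial `x₁^p x₂^q` : summability in every direction outside
finitely many exceptional directions mod `2π`. -/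
def MSummable (a : ℕ → ℕ → E) (k : ℝ) (p q : ℕ) : Prop :=
  ∃ D : Finset ℝ, ∀ d : ℝ, (∀ e ∈ D, ∀ m : ℤ, d ≠ e + 2 * Real.pi * m) →
    MSummableDir a k p q d

/-- Coefficients of `f̂ ∘ π₁`, where `π₁(x₁,x₂) = (x₁x₂, x₂)`. -/
def blowCoeff₁ (a : ℕ → ℕ → E) : ℕ → ℕ → E := fun n m => if n ≤ m then a n (m - n) else 0

/-- Coefficients of `f̂ ∘ π₂`, where `π₂(x₁,x₂) = (x₁, x₁x₂)`. -/
def blowCoeff₂ (a : ℕ → ℕ → E) : ℕ → ℕ → E := fun n m => if m ≤ n then a (n - m) m else 0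

/-- The sector `V(a,b,r)` in one variable. -/
def Sector1 (a b r : ℝ) : Set ℂ :=
  {x | x ≠ 0 ∧ ‖x‖ < r ∧ ∃ θ : ℝ, a < θ ∧ θ < b ∧
    x = (‖x‖ : ℂ) * Complex.exp (θ * Complex.I)}

/-- `f` is a `k`-sum in the variable `x₁`, in direction `d`, of the series
`Σ c n (x₂) x₁ⁿ` with coefficients `c n` holomorphic and bounded on the disk `D_R`. -/
def IsSum1 (c : ℕ → ℂ → E) (R k d : ℝ) (f : ℂ → ℂ → E) : Prop :=
  ∃ a₀ b₀ r : ℝ, Real.pi / k < b₀ - a₀ ∧ d = (a₀ + b₀) / 2 ∧ 0 < r ∧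
    DifferentiableOn ℂ (fun z : ℂ × ℂ => f z.1 z.2) (Sector1 a₀ b₀ r ×ˢ Metric.ball (0 : ℂ) R) ∧
    ∀ a' b' r' : ℝ, a₀ < a' → a' < b' → b' < b₀ → 0 < r' → r' < r →
      ∃ C A : ℝ, 0 < C ∧ 0 < A ∧ ∀ N : ℕ, ∀ x₁ ∈ Sector1 a' b' r', ∀ x₂ ∈ Metric.ball (0 : ℂ) R,
        ‖f x₁ x₂ - ∑ n ∈ Finset.range N, x₁ ^ n • c n x₂‖ ≤
          C * A ^ N * (N.factorial : ℝ) ^ (1 / k) * ‖x₁‖ ^ N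

/-- `k`-summability in the first variable, in direction `d`. -/
def Summable1Dir (c : ℕ → ℂ → E) (R k d : ℝ) : Prop := ∃ f, IsSum1 c R k d f

/-- `k`-summability in the first variable : summability in every direction outside
finitely many exceptional directions mod `2π`. -/
def Summable1 (c : ℕ → ℂ → E) (R k : ℝ) : Prop :=
  ∃ D : Finset ℝ, ∀ d : ℝ, (∀ e ∈ D, ∀ m : ℤ, d ≠ e + 2 * Real.pi * m) →
    Summable1Dir c R k d

/-- The rows `x₂ ↦ Σ_m a n m x₂^m` of a double series. -/
def rowFn (a : ℕ → ℕ → E) (n : ℕ) (x : ℂ) : E := ∑' m : ℕ, x ^ m • a n m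

/-- The columns `x₁ ↦ Σ_n a n m x₁^n` of a double series. -/
def colFn (a : ℕ → ℕ → E) (m : ℕ) (x : ℂ) : E := ∑' n : ℕ, x ^ n • a n m

/-- Each row of `a` converges and defines a bounded (holomorphic) function on `D_r`. -/
def RowsGood (a : ℕ → ℕ → E) (r : ℝ) : Prop :=
  ∀ n : ℕ, (∀ x : ℂ, ‖x‖ < r → Summable fun m : ℕ => x ^ m • a n m) ∧
    ∃ M : ℝ, ∀ x : ℂ, ‖x‖ < r → ‖rowFn a n x‖ ≤ M

/-- Each column of `a` converges and defines a bounded (holomorphic) function on `D_r`. -/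
def ColsGood (a : ℕ → ℕ → E) (r : ℝ) : Prop :=
  ∀ m : ℕ, (∀ x : ℂ, ‖x‖ < r → Summable fun n : ℕ => x ^ n • a n m) ∧
    ∃ M : ℝ, ∀ x : ℂ, ‖x‖ < r → ‖colFn a m x‖ ≤ M

/-!
The monomial Gevrey condition is the conjunction of two one-variable bounds,
`‖a n m‖ ≤ C A^(n+m) n!^(s/p)` and `‖a n m‖ ≤ C A^(n+m) m!^(s/q)`. Since `a n m` is the
coefficient `(n, n+m)` of `f̂∘π₁` and `(n+m, m)` of `f̂∘π₂`, the first bound follows from the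
condition on `f̂∘π₁` and the second from the one on `f̂∘π₂`. In the other direction the only new
estimate is `min (n!^(s/p)) (k!^(s/q)) ≤ (n+k)!^(s/(p+q))`: bound the minimum by the weighted
geometric mean with weights `p/(p+q)`, `q/(p+q)`, and use `n! k! ≤ (n+k)!`. As `π₂` is `π₁` conjugated by the
swap of the variables, only `π₁` needs to be treated.
-/

open Nat Function

theorem Real.min_le_rpow_mul_rpow {u v α β : ℝ} (hu : 0 ≤ u) (hv : 0 ≤ v) (hα : 0 ≤ α)
    (hβ : 0 ≤ β) (hαβ : α + β = 1) : min u v ≤ u ^ α * v ^ β :=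
  calc min u v = min u v ^ α * min u v ^ β := by
        rw [← Real.rpow_add' (le_min hu hv) (by simp [hαβ]), hαβ, Real.rpow_one]
    _ ≤ u ^ α * v ^ β := by
        gcongr
        exacts [min_le_left u v, min_le_right u v]

theorem min_factorial_rpow_le_factorial_add_rpow {p q : ℕ} (hp : 0 < p) (hq : 0 < q) {s : ℝ}
    (hs : 0 ≤ s) (n k : ℕ) :
    min ((n ! : ℝ) ^ (s / p)) ((k ! : ℝ) ^ (s / q)) ≤ ((n + k)! : ℝ) ^ (s / (p + q : ℕ)) := by
  have hp' : (0 : ℝ) < p := by exact_mod_cast hp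
  have hq' : (0 : ℝ) < q := by exact_mod_cast hq
  have hpq : (0 : ℝ) < p + q := by positivity
  have hweights : (p : ℝ) / (p + q) + q / (p + q) = 1 := by field_simp
  calc min ((n ! : ℝ) ^ (s / p)) ((k ! : ℝ) ^ (s / q))
      ≤ ((n ! : ℝ) ^ (s / p)) ^ ((p : ℝ) / (p + q)) * ((k ! : ℝ) ^ (s / q)) ^ ((q : ℝ) / (p + q)) :=
        Real.min_le_rpow_mul_rpow (by positivity) (by positivity) (by positivity) (by positivity)
          hweights
    _ = ((n ! * k ! : ℕ) : ℝ) ^ (s / (p + q : ℕ)) := by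
        rw [← Real.rpow_mul (by positivity), ← Real.rpow_mul (by positivity), Nat.cast_mul,
          Real.mul_rpow (by positivity) (by positivity)]
        congr 2 <;> push_cast <;> field_simp
    _ ≤ ((n + k)! : ℝ) ^ (s / (p + q : ℕ)) := by
        gcongr
        exact Nat.le_of_dvd (factorial_pos _) (factorial_mul_factorial_dvd_factorial_add n k)

theorem pow_le_max_one_pow {A : ℝ} (hA : 0 ≤ A) {k K : ℕ} (hkK : k ≤ K) :
    A ^ k ≤ max A 1 ^ K :=
  (pow_le_pow_left₀ hA (le_max_left A 1) k).trans (pow_le_pow_right₀ (le_max_right A 1) hkK)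

section

variable {F : Type*} [NormedAddCommGroup F]

theorem blowCoeff₂_eq_swap (a : ℕ → ℕ → F) : blowCoeff₂ a = swap (blowCoeff₁ (swap a)) :=
  rfl

theorem monomialGevrey_swap {s : ℝ} {p q : ℕ} {a : ℕ → ℕ → F} :
    MonomialGevrey s q p (swap a) ↔ MonomialGevrey s p q a := by
  refine ⟨fun ⟨C, A, hC, hA, h⟩ => ⟨C, A, hC, hA, fun n m => ?_⟩,
    fun ⟨C, A, hC, hA, h⟩ => ⟨C, A, hC, hA, fun n m => ?_⟩⟩ <;>
  simpa only [swap, add_comm, min_comm] using h m n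

def GevreyFst (s : ℝ) (p : ℕ) (a : ℕ → ℕ → F) : Prop :=
  ∃ C A : ℝ, 0 < C ∧ 0 < A ∧ ∀ n m : ℕ, ‖a n m‖ ≤ C * A ^ (n + m) * (n ! : ℝ) ^ (s / p)

theorem monomialGevrey_iff_gevreyFst {s : ℝ} {p q : ℕ} {a : ℕ → ℕ → F} :
    MonomialGevrey s p q a ↔ GevreyFst s p a ∧ GevreyFst s q (swap a) := by
  constructor
  · rintro ⟨C, A, hC, hA, h⟩
    refine ⟨⟨C, A, hC, hA, fun n m => ?_⟩, ⟨C, A, hC, hA, fun m n => ?_⟩⟩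
    · exact (h n m).trans (by gcongr; exact min_le_left _ _)
    · refine (h n m).trans ?_
      rw [add_comm m n]
      gcongr
      exact min_le_right _ _
  · rintro ⟨⟨C₁, A₁, hC₁, hA₁, h₁⟩, ⟨C₂, A₂, hC₂, hA₂, h₂⟩⟩
    refine ⟨max C₁ C₂, max A₁ A₂, lt_max_of_lt_left hC₁, lt_max_of_lt_left hA₁,
      fun n m => ?_⟩
    rw [mul_min_of_nonneg _ _ (by positivity)]
    refine le_min ((h₁ n m).trans ?_) ((h₂ m n).trans ?_)
    · gcongr <;> simp
    · rw [add_comm m n]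
      gcongr <;> simp

theorem MonomialGevrey.blowCoeff₁ {s : ℝ} {p q : ℕ} (hp : 0 < p) (hq : 0 < q) (hs : 0 ≤ s)
    {a : ℕ → ℕ → F} (h : MonomialGevrey s p q a) :
    MonomialGevrey s p (p + q) (blowCoeff₁ a) := by
  obtain ⟨C, A, hC, hA, h⟩ := h
  refine ⟨C, max A 1, hC, by positivity, fun n m => ?_⟩
  unfold _root_.blowCoeff₁
  split_ifs with hnm
  · obtain ⟨k, rfl⟩ := Nat.exists_eq_add_of_le hnm
    rw [Nat.add_sub_cancel_left]
    refine (h n k).trans ?_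
    gcongr C * ?_ * ?_
    · exact pow_le_max_one_pow hA.le (by omega)
    · exact le_min (min_le_left _ _) (min_factorial_rpow_le_factorial_add_rpow hp hq hs n k)
  · rw [norm_zero]
    positivity

theorem MonomialGevrey.blowCoeff₂ {s : ℝ} {p q : ℕ} (hp : 0 < p) (hq : 0 < q) (hs : 0 ≤ s)
    {a : ℕ → ℕ → F} (h : MonomialGevrey s p q a) :
    MonomialGevrey s (p + q) q (blowCoeff₂ a) := by
  rw [blowCoeff₂_eq_swap, monomialGevrey_swap, add_comm]
  exact (monomialGevrey_swap.2 h).blowCoeff₁ hq hp hs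

theorem GevreyFst.of_blowCoeff₁ {s : ℝ} {p : ℕ} {a : ℕ → ℕ → F}
    (h : GevreyFst s p (blowCoeff₁ a)) : GevreyFst s p a := by
  obtain ⟨C, A, hC, hA, h⟩ := h
  refine ⟨C, max A 1 ^ 2, hC, by positivity, fun n m => ?_⟩
  have hcoeff : blowCoeff₁ a n (n + m) = a n m := by simp [blowCoeff₁]
  rw [← hcoeff, ← pow_mul]
  refine (h n (n + m)).trans ?_
  gcongr
  exact pow_le_max_one_pow hA.le (by omega)

end

/-- **Lemma.** `f̂` is `s`-Gevrey in `x₁^p x₂^q` iff `f̂∘π₁` is `s`-Gevrey in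
`x₁^p x₂^{p+q}` and `f̂∘π₂` is `s`-Gevrey in `x₁^{p+q} x₂^q`. -/
theorem monomialGevrey_blowup_iff
    (p q : ℕ) (hp : 0 < p) (hq : 0 < q) (s : ℝ) (hs : 0 ≤ s)
    (a : ℕ → ℕ → E) :
    MonomialGevrey s p q a ↔
      (MonomialGevrey s p (p + q) (blowCoeff₁ a) ∧ MonomialGevrey s (p + q) q (blowCoeff₂ a)) := by
  refine ⟨fun h => ⟨h.blowCoeff₁ hp hq hs, h.blowCoeff₂ hp hq hs⟩, fun ⟨h₁, h₂⟩ => ?_⟩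
  rw [blowCoeff₂_eq_swap, monomialGevrey_swap] at h₂
  exact monomialGevrey_iff_gevreyFst.2
    ⟨(monomialGevrey_iff_gevreyFst.1 h₁).1.of_blowCoeff₁,
      (monomialGevrey_iff_gevreyFst.1 h₂).1.of_blowCoeff₁⟩
end
end

section
/- Let (E,‖·‖) be a complex Banach space and f̂ ∈ E[[x₁,x₂]] a formal power series. The following are equivalent: (i) f̂ is convergent; (ii) f̂∘π₁ is convergent; (iii) f̂∘π₂ is convergent. -/
open Filter
open scoped Topology

noncomputable section

variable {E : Type*} [NormedAddCommGroup E] [NormedSpace ℂ E] [CompleteSpace E]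

/-! Blowing up only moves coefficients: `f̂∘π₁` carries `a n m` in degree `2n + m` instead of
`n + m`, and `f̂∘π₂` in degree `n + 2m`. These degrees are comparable, `n + m ≤ 2n + m ≤ 2(n + m)`,
so a radius `ρ ≤ 1` that works for one of the series gives the radius `ρ²` for the other. -/

theorem exists_summable_mul_pow_of_le_mul {ι : Type*} {c : ι → ℝ} (hc : ∀ i, 0 ≤ c i)
    {e f : ι → ℕ} (k : ℕ) (hfe : ∀ i, f i ≤ k * e i)
    (h : ∃ ρ : ℝ, 0 < ρ ∧ Summable fun i => c i * ρ ^ f i) :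
    ∃ ρ : ℝ, 0 < ρ ∧ Summable fun i => c i * ρ ^ e i := by
  obtain ⟨ρ, hρ, hs⟩ := h
  have hτ : 0 < min ρ 1 := lt_min hρ one_pos
  refine ⟨min ρ 1 ^ k, by positivity,
    hs.of_nonneg_of_le (fun i => mul_nonneg (hc i) (by positivity)) fun i => ?_⟩
  refine mul_le_mul_of_nonneg_left ?_ (hc i)
  calc (min ρ 1 ^ k) ^ e i = min ρ 1 ^ (k * e i) := (pow_mul _ _ _).symm
    _ ≤ min ρ 1 ^ f i := pow_le_pow_of_le_one hτ.le (min_le_right _ _) (hfe i)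
    _ ≤ ρ ^ f i := pow_le_pow_left₀ hτ.le (min_le_left _ _) _

theorem exists_summable_mul_pow_iff {ι : Type*} {c : ι → ℝ} (hc : ∀ i, 0 ≤ c i)
    {e f : ι → ℕ} (k : ℕ) (hef : ∀ i, e i ≤ f i) (hfe : ∀ i, f i ≤ k * e i) :
    (∃ ρ : ℝ, 0 < ρ ∧ Summable fun i => c i * ρ ^ e i) ↔
      ∃ ρ : ℝ, 0 < ρ ∧ Summable fun i => c i * ρ ^ f i :=
  ⟨exists_summable_mul_pow_of_le_mul hc 1 (by simpa using hef),
    exists_summable_mul_pow_of_le_mul hc k hfe⟩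

section Blowup

omit [NormedSpace ℂ E] [CompleteSpace E]

@[simp]
theorem blowCoeff₁_add (a : ℕ → ℕ → E) (n m : ℕ) : blowCoeff₁ a n (n + m) = a n m := by
  simp [blowCoeff₁]

theorem blowCoeff₁_of_lt (a : ℕ → ℕ → E) {n m : ℕ} (h : m < n) : blowCoeff₁ a n m = 0 :=
  if_neg (by omega)

@[simp]
theorem blowCoeff₂_add (a : ℕ → ℕ → E) (n m : ℕ) : blowCoeff₂ a (n + m) m = a n m := by
  simp [blowCoeff₂]

theorem blowCoeff₂_of_lt (a : ℕ → ℕ → E) {n m : ℕ} (h : n < m) : blowCoeff₂ a n m = 0 :=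
  if_neg (by omega)

theorem summable_norm_blowCoeff₁_mul_iff (a : ℕ → ℕ → E) (w : ℕ → ℕ → ℝ) :
    (Summable fun nm : ℕ × ℕ => ‖blowCoeff₁ a nm.1 nm.2‖ * w nm.1 nm.2) ↔
      Summable fun nm : ℕ × ℕ => ‖a nm.1 nm.2‖ * w nm.1 (nm.1 + nm.2) := by
  have hinj : Function.Injective fun nm : ℕ × ℕ => (nm.1, nm.1 + nm.2) := by
    rintro ⟨n, m⟩ ⟨n', m'⟩ h
    simp only [Prod.mk.injEq] at h
    ext <;> omega
  rw [← hinj.summable_iff]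
  · simp only [Function.comp_def, blowCoeff₁_add]
  · rintro ⟨n, m⟩ hnm
    have hmn : m < n := by
      by_contra! h
      exact hnm ⟨(n, m - n), Prod.ext rfl (Nat.add_sub_cancel' h)⟩
    simp [blowCoeff₁_of_lt a hmn]

theorem summable_norm_blowCoeff₂_mul_iff (a : ℕ → ℕ → E) (w : ℕ → ℕ → ℝ) :
    (Summable fun nm : ℕ × ℕ => ‖blowCoeff₂ a nm.1 nm.2‖ * w nm.1 nm.2) ↔
      Summable fun nm : ℕ × ℕ => ‖a nm.1 nm.2‖ * w (nm.1 + nm.2) nm.2 := by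
  have hinj : Function.Injective fun nm : ℕ × ℕ => (nm.1 + nm.2, nm.2) := by
    rintro ⟨n, m⟩ ⟨n', m'⟩ h
    simp only [Prod.mk.injEq] at h
    ext <;> omega
  rw [← hinj.summable_iff]
  · simp only [Function.comp_def, blowCoeff₂_add]
  · rintro ⟨n, m⟩ hnm
    have hnm' : n < m := by
      by_contra! h
      exact hnm ⟨(n - m, m), Prod.ext (Nat.sub_add_cancel h) rfl⟩
    simp [blowCoeff₂_of_lt a hnm']

end Blowup

/-- **Lemma.** `f̂` is convergent iff `f̂∘π₁` is convergent iff `f̂∘π₂` is convergent. -/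
theorem psConvergent_blowup_iff (a : ℕ → ℕ → E) :
    (PSConvergent a ↔ PSConvergent (blowCoeff₁ a)) ∧
    (PSConvergent a ↔ PSConvergent (blowCoeff₂ a)) := by
  have hc : ∀ nm : ℕ × ℕ, 0 ≤ ‖a nm.1 nm.2‖ := fun _ => norm_nonneg _
  have h₁ := fun ρ : ℝ => summable_norm_blowCoeff₁_mul_iff a fun n m => ρ ^ (n + m)
  have h₂ := fun ρ : ℝ => summable_norm_blowCoeff₂_mul_iff a fun n m => ρ ^ (n + m)
  simp only [PSConvergent, h₁, h₂]
  exact ⟨exists_summable_mul_pow_iff hc 2 (fun _ => by omega) (fun _ => by omega),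
    exists_summable_mul_pow_iff hc 2 (fun _ => by omega) (fun _ => by omega)⟩
end
end

section
/- Let (E,‖·‖) be a complex Banach space, R > 0, k > 0 and d a direction. Let f̂ = Σ_n f_{n*}(x₂) x₁ⁿ be a formal power series in x₁ with coefficients f_{n*} holomorphic and bounded on the disk D_R, which is k-summable in x₁ in direction d with k-sum f. Then: (a) f̂∘π₁ ∈ E[[x₁,x₂]] is k-summable in the monomial x₁x₂ in direction d with k-sum f∘π₁; and (b) f̂∘π₂ is k-summable in x₁ (as a series in x₁ with bounded holomorphic coefficients on D_R) in direction d with k-sum f∘π₂. -/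
open Filter
open scoped Topology

noncomputable section

variable {E : Type*} [NormedAddCommGroup E] [NormedSpace ℂ E] [CompleteSpace E]

open Metric Finset
open scoped Nat

/-!
Part (a) is a change of variables: `π₁` maps the monomial sector `Π_{1,1}(a,b,ρ)` into
`V(a,b,ρ²) × D_R`, the `(1,1)`-coefficient functions of `f̂ ∘ π₁` are the `c n (x₂)`, and the
Gevrey remainder estimates of `f` in `x₁` are literally those of `f ∘ π₁` in `x₁x₂`.

For (b), the remainder estimates of `f` at a single point of the sector show, by telescoping,
that the coefficients are uniformly Gevrey: `‖c n‖ ≤ C Aⁿ n!^{1/k}` on `D_R`. Cauchy's estimates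
then bound the Taylor coefficients by `‖b n m‖ ≤ C Aⁿ n!^{1/k} (2/R)^m`, so for `|x₁| ≤ 1/4` the
Taylor tail of `c n (x₁x₂)` after `N - n` terms is `O(Aⁿ n!^{1/k} (2|x₁|)^{N-n})`. Regrouping the
partial sums of `f̂ ∘ π₂` along `n = j - m`, the remainder of `f ∘ π₂` at order `N` is that of `f`
plus `N` such tails, hence `O((4A)^N N!^{1/k} |x₁|^N)`.
-/

theorem norm_mul_lt_of_norm_le_one {α : Type*} [SeminormedRing α] {x y : α} {R : ℝ}
    (hx : ‖x‖ ≤ 1) (hy : ‖y‖ < R) : ‖x * y‖ < R :=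
  (norm_mul_le x y).trans_lt ((mul_le_of_le_one_left (norm_nonneg _) hx).trans_lt hy)

theorem factorial_succ_rpow_le {s : ℝ} (hs : 0 ≤ s) (n : ℕ) :
    ((n + 1)! : ℝ) ^ s ≤ (2 ^ s) ^ n * (n ! : ℝ) ^ s := by
  have h : ((n + 1)! : ℝ) ≤ 2 ^ n * n ! := by
    rw [Nat.factorial_succ, Nat.cast_mul]
    gcongr
    exact_mod_cast n.lt_two_pow_self
  calc ((n + 1)! : ℝ) ^ s ≤ (2 ^ n * n ! : ℝ) ^ s := by gcongr
    _ = (2 ^ s) ^ n * (n ! : ℝ) ^ s := by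
        rw [Real.mul_rpow (by positivity) (by positivity), Real.rpow_pow_comm zero_le_two]

theorem norm_sub_sum_range_le_of_norm_le_geometric {F : Type*} [SeminormedAddCommGroup F]
    {f : ℕ → F} {s : F} {C q : ℝ} (hs : HasSum f s) (hq : q < 1)
    (hf : ∀ n, ‖f n‖ ≤ C * q ^ n) (K : ℕ) :
    ‖s - ∑ n ∈ range K, f n‖ ≤ C * q ^ K / (1 - q) := by
  rw [← dist_eq_norm, dist_comm]
  refine dist_le_of_le_geometric_of_tendsto q C hq (fun n ↦ ?_) hs.tendsto_sum_nat K
  simpa [dist_eq_norm, sum_range_succ] using hf n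

theorem ofReal_mul_exp_mem_sector1 {a b r t θ : ℝ} (ht : 0 < t) (htr : t < r) (haθ : a < θ)
    (hθb : θ < b) : (t : ℂ) * Complex.exp (θ * Complex.I) ∈ Sector1 a b r := by
  have hnorm : ‖(t : ℂ) * Complex.exp (θ * Complex.I)‖ = t := by
    rw [norm_mul, Complex.norm_exp_ofReal_mul_I, Complex.norm_real, Real.norm_of_nonneg ht.le,
      mul_one]
  exact ⟨by simp [ht.ne'], hnorm.trans_lt htr, θ, haθ, hθb, by rw [hnorm]⟩

theorem mul_mem_sector1_of_mem_mSector {a b ρ : ℝ} {x : ℂ × ℂ} (hx : x ∈ MSector 1 1 a b ρ) :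
    x.1 * x.2 ∈ Sector1 a b (ρ * ρ) ∧ ‖x.2‖ < ρ := by
  obtain ⟨hx₁, hx₂, hρ₁, hρ₂, θ, haθ, hθb, hθ⟩ := hx
  simp only [pow_one] at hρ₁ hρ₂ hθ
  refine ⟨⟨mul_ne_zero hx₁ hx₂, ?_, θ, haθ, hθb, hθ⟩, hρ₂⟩
  rw [norm_mul]
  exact mul_lt_mul'' hρ₁ hρ₂ (norm_nonneg _) (norm_nonneg _)

section

variable {F : Type*} [NormedAddCommGroup F] [NormedSpace ℂ F]

theorem norm_le_div_pow_of_hasSum_pow_smul [CompleteSpace F] {g : ℂ → F} {b : ℕ → F}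
    {R ρ M : ℝ} (hρ : 0 < ρ) (hρR : ρ < R) (hg : DifferentiableOn ℂ g (ball 0 R))
    (hsum : ∀ x : ℂ, ‖x‖ < R → HasSum (fun m ↦ x ^ m • b m) (g x))
    (hM : ∀ x ∈ ball (0 : ℂ) R, ‖g x‖ ≤ M) (m : ℕ) : ‖b m‖ ≤ M / ρ ^ m := by
  lift ρ to NNReal using hρ.le
  let p : FormalMultilinearSeries ℂ ℂ F :=
    fun m ↦ ContinuousMultilinearMap.mkPiRing ℂ (Fin m) (b m)
  have hρ' : ‖(ρ : ℂ)‖ < R := by simpa [abs_of_pos hρ] using hρR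
  have hp : HasFPowerSeriesOnBall g p 0 ρ :=
    { r_le := p.le_radius_of_tendsto (l := 0) <| by
        simpa [p, norm_smul, abs_of_pos hρ, mul_comm] using
          (hsum ρ hρ').summable.tendsto_atTop_zero.norm
      r_pos := by simpa using hρ
      hasSum := fun {y} hy ↦ by
        simpa [p] using hsum y ((by simpa using hy : ‖y‖ < ρ).trans hρR) }
  have hderiv : m ! • b m = iteratedDeriv m g 0 := by
    rw [iteratedDeriv_eq_iteratedFDeriv, ← hp.factorial_smul]
    simp [p]
  have hcauchy := Complex.norm_iteratedDeriv_le_of_forall_mem_sphere_norm_le m hρ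
    (hg.diffContOnCl_ball (closedBall_subset_ball hρR))
    fun z hz ↦ hM z (sphere_subset_ball hρR hz)
  rw [← hderiv, RCLike.norm_nsmul ℂ, nsmul_eq_mul, mul_div_assoc] at hcauchy
  exact le_of_mul_le_mul_left hcauchy (by positivity)

theorem norm_sub_sum_range_mul_pow_smul_le [CompleteSpace F] {g : ℂ → F} {b : ℕ → F} {R M : ℝ}
    (hR : 0 < R) (hg : DifferentiableOn ℂ g (ball 0 R))
    (hsum : ∀ x : ℂ, ‖x‖ < R → HasSum (fun m ↦ x ^ m • b m) (g x))
    (hM : ∀ x ∈ ball (0 : ℂ) R, ‖g x‖ ≤ M) {x₁ x₂ : ℂ} (hx₁ : ‖x₁‖ ≤ 1 / 4) (hx₂ : ‖x₂‖ < R)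
    (K : ℕ) :
    ‖g (x₁ * x₂) - ∑ m ∈ range K, (x₁ * x₂) ^ m • b m‖ ≤ 2 * M * (2 * ‖x₁‖) ^ K := by
  have hM₀ : 0 ≤ M := (norm_nonneg _).trans (hM 0 (mem_ball_self hR))
  have hz : ‖x₁ * x₂‖ < R := norm_mul_lt_of_norm_le_one (by linarith) hx₂
  have hterm : ∀ m, ‖(x₁ * x₂) ^ m • b m‖ ≤ M * (2 * ‖x₁‖) ^ m := fun m ↦ by
    have hb := norm_le_div_pow_of_hasSum_pow_smul (half_pos hR) (half_lt_self hR) hg hsum hM m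
    calc ‖(x₁ * x₂) ^ m • b m‖ = ‖x₁‖ ^ m * ‖x₂‖ ^ m * ‖b m‖ := by
          rw [norm_smul, norm_pow, norm_mul, mul_pow]
      _ ≤ ‖x₁‖ ^ m * R ^ m * (M / (R / 2) ^ m) := by gcongr
      _ = M * (2 * ‖x₁‖) ^ m := by rw [div_pow, mul_pow]; field_simp
  calc _ ≤ M * (2 * ‖x₁‖) ^ K / (1 - 2 * ‖x₁‖) :=
        norm_sub_sum_range_le_of_norm_le_geometric (hsum _ hz) (by linarith) hterm K
    _ ≤ M * (2 * ‖x₁‖) ^ K / (1 / 2) := by gcongr; linarith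
    _ = 2 * M * (2 * ‖x₁‖) ^ K := by ring

theorem norm_coeff_le_of_norm_remainder_le {x : ℂ} (hx : x ≠ 0) {y : F} {c : ℕ → F}
    {C A s : ℝ} (hA : 0 ≤ A) (hs : 0 ≤ s)
    (h : ∀ N, ‖y - ∑ n ∈ range N, x ^ n • c n‖ ≤ C * A ^ N * (N ! : ℝ) ^ s * ‖x‖ ^ N)
    (n : ℕ) : ‖c n‖ ≤ C * (1 + A * ‖x‖) * (2 ^ s * A) ^ n * (n ! : ℝ) ^ s := by
  have hC : 0 ≤ C := by simpa using (norm_nonneg _).trans (h 0)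
  have hxn : 0 < ‖x‖ ^ n := by positivity
  have hdiff : x ^ n • c n =
      (y - ∑ j ∈ range n, x ^ j • c j) - (y - ∑ j ∈ range (n + 1), x ^ j • c j) := by
    rw [sum_range_succ]; abel
  have htel : ‖x‖ ^ n * ‖c n‖ ≤
      ‖x‖ ^ n * (C * A ^ n * (n ! : ℝ) ^ s + C * A ^ (n + 1) * ((n + 1)! : ℝ) ^ s * ‖x‖) := by
    have := (norm_sub_le _ _).trans (add_le_add (h n) (h (n + 1)))
    rw [← hdiff, norm_smul, norm_pow] at this
    exact this.trans_eq (by ring)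
  have h2s : 1 ≤ (2 : ℝ) ^ s := Real.one_le_rpow one_le_two hs
  calc ‖c n‖ ≤ C * A ^ n * (n ! : ℝ) ^ s + C * A ^ (n + 1) * ((n + 1)! : ℝ) ^ s * ‖x‖ :=
        le_of_mul_le_mul_left htel hxn
    _ ≤ C * A ^ n * ((2 ^ s) ^ n * (n ! : ℝ) ^ s)
        + C * A ^ (n + 1) * ((2 ^ s) ^ n * (n ! : ℝ) ^ s) * ‖x‖ := by
        gcongr
        · exact le_mul_of_one_le_left (by positivity) (one_le_pow₀ h2s)
        · exact factorial_succ_rpow_le hs n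
    _ = C * (1 + A * ‖x‖) * (2 ^ s * A) ^ n * (n ! : ℝ) ^ s := by ring

theorem hasSum_blowCoeff₁_iff (a : ℕ → ℕ → F) (n : ℕ) (x : ℂ × ℂ) (s : F) :
    HasSum (fun mj : coeffIndex 1 1 ↦
        (x.1 ^ mj.1.1 * x.2 ^ mj.1.2) • blowCoeff₁ a (n * 1 + mj.1.1) (n * 1 + mj.1.2)) s ↔
      HasSum (fun j ↦ x.2 ^ j • a n j) s := by
  let e : ℕ → coeffIndex 1 1 := fun j ↦ ⟨(0, j), Or.inl one_pos⟩
  have he : Function.Injective e := fun j j' h ↦ congrArg (fun mj : coeffIndex 1 1 ↦ mj.1.2) h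
  rw [← he.hasSum_iff]
  · congr!
    simp [e, blowCoeff₁]
  · rintro ⟨⟨m, j⟩, hmj⟩ hne
    have hm : m ≠ 0 := by rintro rfl; exact hne ⟨j, rfl⟩
    obtain rfl : j = 0 := by simp only [coeffIndex, Set.mem_ofPred_eq] at hmj; omega
    simp [blowCoeff₁, hm]

theorem coeffFn_blowCoeff₁ {a : ℕ → ℕ → F} {n : ℕ} {x : ℂ × ℂ} {s : F}
    (h : HasSum (fun j ↦ x.2 ^ j • a n j) s) : coeffFn (blowCoeff₁ a) 1 1 n x = s :=
  ((hasSum_blowCoeff₁_iff a n x s).2 h).tsum_eq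

theorem sum_range_smul_sum_range_succ_eq (b : ℕ → ℕ → F) (x₁ x₂ : ℂ) (N : ℕ) :
    ∑ j ∈ range N, x₁ ^ j • ∑ m ∈ range (j + 1), x₂ ^ m • b (j - m) m =
      ∑ n ∈ range N, x₁ ^ n • ∑ m ∈ range (N - n), (x₁ * x₂) ^ m • b n m := by
  simp only [smul_sum, smul_smul]
  rw [sum_sigma', sum_sigma']
  refine sum_nbij' (fun p ↦ ⟨p.1 - p.2, p.2⟩) (fun p ↦ ⟨p.1 + p.2, p.2⟩) ?_ ?_ ?_ ?_ ?_
  all_goals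
    rintro ⟨j, m⟩ h
    simp only [mem_sigma, mem_range] at h ⊢
  · omega
  · omega
  · rw [Nat.sub_add_cancel (by omega)]
  · rw [Nat.add_sub_cancel]
  · rw [mul_pow, ← mul_assoc, ← pow_add, Nat.sub_add_cancel (by omega)]

theorem sub_sum_range_smul_sum_range_succ_eq (y : F) (g : ℕ → F) (b : ℕ → ℕ → F) (x₁ x₂ : ℂ)
    (N : ℕ) :
    y - ∑ j ∈ range N, x₁ ^ j • ∑ m ∈ range (j + 1), x₂ ^ m • b (j - m) m =
      (y - ∑ n ∈ range N, x₁ ^ n • g n) +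
        ∑ n ∈ range N, x₁ ^ n • (g n - ∑ m ∈ range (N - n), (x₁ * x₂) ^ m • b n m) := by
  rw [sum_range_smul_sum_range_succ_eq]
  simp only [smul_sub, sum_sub_distrib]
  abel

theorem norm_sum_range_pow_smul_le {x : ℂ} {v : ℕ → F} {C A s : ℝ} (hC : 0 ≤ C) (hA : 1 ≤ A)
    (hs : 0 ≤ s) (N : ℕ)
    (hv : ∀ n < N, ‖v n‖ ≤ C * A ^ n * (n ! : ℝ) ^ s * (2 * ‖x‖) ^ (N - n)) :
    ‖∑ n ∈ range N, x ^ n • v n‖ ≤ C * (4 * A) ^ N * (N ! : ℝ) ^ s * ‖x‖ ^ N := by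
  have hterm : ∀ n ∈ range N, ‖x ^ n • v n‖ ≤ C * (2 * A) ^ N * (N ! : ℝ) ^ s * ‖x‖ ^ N := by
    intro n hn
    have hnN := (mem_range.1 hn).le
    calc ‖x ^ n • v n‖ ≤ ‖x‖ ^ n * (C * A ^ n * (n ! : ℝ) ^ s * (2 * ‖x‖) ^ (N - n)) := by
          rw [norm_smul, norm_pow]; gcongr; exact hv n (mem_range.1 hn)
      _ = C * A ^ n * (n ! : ℝ) ^ s * 2 ^ (N - n) * (‖x‖ ^ n * ‖x‖ ^ (N - n)) := by ring
      _ ≤ C * A ^ N * (N ! : ℝ) ^ s * 2 ^ N * ‖x‖ ^ N := by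
          rw [pow_mul_pow_sub _ hnN]
          gcongr
          exacts [one_le_two, N.sub_le n]
      _ = C * (2 * A) ^ N * (N ! : ℝ) ^ s * ‖x‖ ^ N := by ring
  calc ‖∑ n ∈ range N, x ^ n • v n‖ ≤ ∑ n ∈ range N, ‖x ^ n • v n‖ := norm_sum_le _ _
    _ ≤ N * (C * (2 * A) ^ N * (N ! : ℝ) ^ s * ‖x‖ ^ N) := by
        simpa using sum_le_sum hterm
    _ ≤ 2 ^ N * (C * (2 * A) ^ N * (N ! : ℝ) ^ s * ‖x‖ ^ N) := by
        gcongr; exact_mod_cast N.lt_two_pow_self.le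
    _ = C * (4 * A) ^ N * (N ! : ℝ) ^ s * ‖x‖ ^ N := by
        rw [mul_pow, mul_pow, show (4 : ℝ) ^ N = 2 ^ N * 2 ^ N by rw [← mul_pow]; norm_num]
        ring

theorem IsSum1.exists_norm_coeff_le {c : ℕ → ℂ → F} {R k d : ℝ} {f : ℂ → ℂ → F} (hk : 0 < k)
    (hf : IsSum1 c R k d f) :
    ∃ C A : ℝ, 0 < C ∧ 1 ≤ A ∧
      ∀ n, ∀ x ∈ ball (0 : ℂ) R, ‖c n x‖ ≤ C * A ^ n * (n ! : ℝ) ^ (1 / k) := by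
  obtain ⟨a₀, b₀, r, hab, rfl, hr, -, hest⟩ := hf
  have hopen : 0 < b₀ - a₀ := (div_pos Real.pi_pos hk).trans hab
  obtain ⟨C, A, hC, hA, hbd⟩ := hest (a₀ + (b₀ - a₀) / 4) (b₀ - (b₀ - a₀) / 4) (r / 2)
    (by linarith) (by linarith) (by linarith) (by positivity) (by linarith)
  set x : ℂ := ((r / 4 : ℝ) : ℂ) * Complex.exp (((a₀ + b₀) / 2 : ℝ) * Complex.I)
  have hx : x ∈ Sector1 (a₀ + (b₀ - a₀) / 4) (b₀ - (b₀ - a₀) / 4) (r / 2) :=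
    ofReal_mul_exp_mem_sector1 (by positivity) (by linarith) (by linarith) (by linarith)
  refine ⟨C * (1 + A * ‖x‖), max (2 ^ (1 / k) * A) 1, by positivity, le_max_right _ _,
    fun n x₂ hx₂ ↦ ?_⟩
  calc ‖c n x₂‖ ≤ C * (1 + A * ‖x‖) * (2 ^ (1 / k) * A) ^ n * (n ! : ℝ) ^ (1 / k) :=
        norm_coeff_le_of_norm_remainder_le hx.1 hA.le (by positivity)
          (fun N ↦ hbd N x hx x₂ hx₂) n
    _ ≤ C * (1 + A * ‖x‖) * (max (2 ^ (1 / k) * A) 1) ^ n * (n ! : ℝ) ^ (1 / k) := by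
        gcongr; exact le_max_left _ _

theorem IsSum1.isMSum_comp_blowup₁ {c : ℕ → ℂ → F} {b : ℕ → ℕ → F} {R k d : ℝ}
    {f : ℂ → ℂ → F} (hR : 0 < R)
    (hc : ∀ n, DifferentiableOn ℂ (c n) (ball 0 R) ∧ ∃ M : ℝ, ∀ x ∈ ball (0 : ℂ) R, ‖c n x‖ ≤ M)
    (hb : ∀ n, ∀ x : ℂ, ‖x‖ < R → HasSum (fun m ↦ x ^ m • b n m) (c n x))
    (hf : IsSum1 c R k d f) :
    IsMSum (blowCoeff₁ b) k 1 1 d (fun x : ℂ × ℂ ↦ f (x.1 * x.2) x.2) := by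
  obtain ⟨a₀, b₀, r, hab, hd, hr, hdiff, hest⟩ := hf
  set r₁ := min √r R
  have hr₁ : 0 < r₁ := lt_min (Real.sqrt_pos.2 hr) hR
  have hr₁R : r₁ ≤ R := min_le_right _ _
  have hr₁r : r₁ * r₁ ≤ r :=
    (mul_self_le_mul_self hr₁.le (min_le_left _ _)).trans (Real.mul_self_sqrt hr.le).le
  have hcoeff : ∀ n {x : ℂ × ℂ}, ‖x.2‖ < R → coeffFn (blowCoeff₁ b) 1 1 n x = c n x.2 :=
    fun n x hx ↦ coeffFn_blowCoeff₁ (hb n x.2 hx)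
  have hgood : CoeffFnGood (blowCoeff₁ b) 1 1 r₁ := fun n ↦ by
    obtain ⟨hdc, M, hM⟩ := hc n
    refine ⟨fun x _ hx₂ ↦ ((hasSum_blowCoeff₁_iff b n x _).2
      (hb n x.2 (hx₂.trans_le hr₁R))).summable, ?_, M, fun x _ hx₂ ↦ ?_⟩
    · refine (hdc.comp differentiableOn_snd fun x hx ↦ ?_).congr fun x hx ↦ ?_
      · exact mem_ball_zero_iff.2 (hx.2.trans_le hr₁R)
      · exact hcoeff n (hx.2.trans_le hr₁R)
    · rw [hcoeff n (hx₂.trans_le hr₁R)]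
      exact hM _ (mem_ball_zero_iff.2 (hx₂.trans_le hr₁R))
  refine ⟨a₀, b₀, r₁, hab, hd, hr₁, ?_, r₁, hr₁, le_rfl, hgood, ?_⟩
  · refine hdiff.comp (f := fun x : ℂ × ℂ ↦ (x.1 * x.2, x.2)) (by fun_prop) fun x hx ↦ ?_
    obtain ⟨hx₁₂, hx₂⟩ := mul_mem_sector1_of_mem_mSector hx
    exact ⟨⟨hx₁₂.1, hx₁₂.2.1.trans_le hr₁r, hx₁₂.2.2⟩, mem_ball_zero_iff.2 (hx₂.trans_le hr₁R)⟩
  · intro a' b' ρ ha' hab' hb' hρ hρr₁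
    obtain ⟨C, A, hC, hA, hbd⟩ := hest a' b' (ρ * ρ) ha' hab' hb' (by positivity)
      ((mul_self_lt_mul_self hρ.le hρr₁).trans_le hr₁r)
    refine ⟨C, A, hC, hA, fun N x hx ↦ ?_⟩
    obtain ⟨hx₁₂, hx₂⟩ := mul_mem_sector1_of_mem_mSector hx
    have hx₂R : ‖x.2‖ < R := hx₂.trans (hρr₁.trans_le hr₁R)
    simp only [pow_one, hcoeff _ hx₂R]
    exact hbd N _ hx₁₂ x.2 (mem_ball_zero_iff.2 hx₂R)

theorem IsSum1.isSum1_comp_blowup₂ [CompleteSpace F] {c : ℕ → ℂ → F} {b : ℕ → ℕ → F}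
    {R k d : ℝ} {f : ℂ → ℂ → F} (hR : 0 < R) (hk : 0 < k)
    (hc : ∀ n, DifferentiableOn ℂ (c n) (ball 0 R))
    (hb : ∀ n, ∀ x : ℂ, ‖x‖ < R → HasSum (fun m ↦ x ^ m • b n m) (c n x))
    (hf : IsSum1 c R k d f) :
    IsSum1 (fun N x₂ ↦ ∑ m ∈ range (N + 1), x₂ ^ m • b (N - m) m) R k d
      (fun x₁ x₂ ↦ f x₁ (x₁ * x₂)) := by
  obtain ⟨C₀, A₀, hC₀, hA₀, hcoeff⟩ := hf.exists_norm_coeff_le hk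
  obtain ⟨a₀, b₀, r, hab, hd, hr, hdiff, hest⟩ := hf
  refine ⟨a₀, b₀, min r (1 / 4), hab, hd, lt_min hr (by norm_num), ?_,
    fun a' b' r' ha' hab' hb' hr' hr'r ↦ ?_⟩
  · refine hdiff.comp (f := fun z : ℂ × ℂ ↦ (z.1, z.1 * z.2)) (by fun_prop) fun z ⟨hz₁, hz₂⟩ ↦ ?_
    have hz₁r : ‖z.1‖ < min r (1 / 4) := hz₁.2.1
    have hz₁1 : ‖z.1‖ ≤ 1 := by linarith [hz₁r.trans_le (min_le_right _ _)]
    exact ⟨⟨hz₁.1, hz₁r.trans_le (min_le_left _ _), hz₁.2.2⟩,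
      mem_ball_zero_iff.2 (norm_mul_lt_of_norm_le_one hz₁1 (mem_ball_zero_iff.1 hz₂))⟩
  · obtain ⟨C, A, hC, hA, hbd⟩ :=
      hest a' b' r' ha' hab' hb' hr' (hr'r.trans_le (min_le_left _ _))
    refine ⟨C + 2 * C₀, max A (4 * A₀), by positivity, hA.trans_le (le_max_left _ _),
      fun N x₁ hx₁ x₂ hx₂ ↦ ?_⟩
    have hx₁4 : ‖x₁‖ ≤ 1 / 4 := (hx₁.2.1.trans (hr'r.trans_le (min_le_right _ _))).le
    have hx₂R : ‖x₂‖ < R := mem_ball_zero_iff.1 hx₂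
    have hrem := hbd N x₁ hx₁ (x₁ * x₂)
      (mem_ball_zero_iff.2 (norm_mul_lt_of_norm_le_one (by linarith) hx₂R))
    have htail : ‖∑ n ∈ range N, x₁ ^ n •
          (c n (x₁ * x₂) - ∑ m ∈ range (N - n), (x₁ * x₂) ^ m • b n m)‖ ≤
        2 * C₀ * (4 * A₀) ^ N * (N ! : ℝ) ^ (1 / k) * ‖x₁‖ ^ N :=
      norm_sum_range_pow_smul_le (by positivity) hA₀ (by positivity) N fun n _ ↦
        (norm_sub_sum_range_mul_pow_smul_le hR (hc n) (hb n) (hcoeff n) hx₁4 hx₂R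
          (N - n)).trans_eq (by ring)
    dsimp only
    rw [sub_sum_range_smul_sum_range_succ_eq (g := fun n ↦ c n (x₁ * x₂))]
    calc _ ≤ _ := norm_add_le _ _
      _ ≤ C * A ^ N * (N ! : ℝ) ^ (1 / k) * ‖x₁‖ ^ N +
          2 * C₀ * (4 * A₀) ^ N * (N ! : ℝ) ^ (1 / k) * ‖x₁‖ ^ N := add_le_add hrem htail
      _ ≤ C * (max A (4 * A₀)) ^ N * (N ! : ℝ) ^ (1 / k) * ‖x₁‖ ^ N +
          2 * C₀ * (max A (4 * A₀)) ^ N * (N ! : ℝ) ^ (1 / k) * ‖x₁‖ ^ N := by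
        gcongr
        exacts [le_max_left _ _, le_max_right _ _]
      _ = (C + 2 * C₀) * (max A (4 * A₀)) ^ N * (N ! : ℝ) ^ (1 / k) * ‖x₁‖ ^ N := by ring

end

/-- **Proposition.** If `f̂ = Σ c n (x₂) x₁ⁿ` (with bounded holomorphic coefficients `c n`
on `D_R`, with Taylor coefficients `b n m`) is `k`-summable in `x₁` in direction `d` with
`k`-sum `f`, then `f̂∘π₁` is `k`-summable in the monomial `x₁x₂` in direction `d` with
`k`-sum `f∘π₁`, and `f̂∘π₂` is `k`-summable in `x₁` in direction `d` with `k`-sum `f∘π₂`. -/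
theorem isSum1_blowup
    (R k : ℝ) (hR : 0 < R) (hk : 0 < k) (d : ℝ)
    (c : ℕ → ℂ → E) (b : ℕ → ℕ → E)
    (hc : ∀ n, DifferentiableOn ℂ (c n) (Metric.ball (0 : ℂ) R) ∧
      ∃ M : ℝ, ∀ x ∈ Metric.ball (0 : ℂ) R, ‖c n x‖ ≤ M)
    (hb : ∀ n, ∀ x : ℂ, ‖x‖ < R → HasSum (fun m : ℕ => x ^ m • b n m) (c n x))
    (f : ℂ → ℂ → E) (hf : IsSum1 c R k d f) :
    IsMSum (blowCoeff₁ b) k 1 1 d (fun x : ℂ × ℂ => f (x.1 * x.2) x.2) ∧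
    IsSum1 (fun N x₂ => ∑ m ∈ Finset.range (N + 1), x₂ ^ m • b (N - m) m) R k d
      (fun x₁ x₂ => f x₁ (x₁ * x₂)) :=
  ⟨hf.isMSum_comp_blowup₁ hR hc hb, hf.isSum1_comp_blowup₂ hR hk (fun n ↦ (hc n).1) hb⟩
end
end

section
/- Let (E,‖·‖) be a complex Banach space, p, q, p', q' positive integers and s ≥ 0. If f̂ = Σ_{n,m≥0} a_{n,m} x₁ⁿx₂^m ∈ E[[x₁,x₂]] is s-Gevrey in the monomial x₁^{p'}x₂^{q'}, then there exist r > 0 and constants C, A > 0 such that each (p,q)-coefficient function f_n of f̂ converges and defines a bounded holomorphic map on the polydisk {|x₁| ≤ r, |x₂| ≤ r} with sup_{|x₁|,|x₂|≤r} ‖f_n(x₁,x₂)‖ ≤ C·Aⁿ·n!^{σ s}, where σ = max(p/p', q/q'). In other words, the image of f̂ under the operator T̂_{p,q} is a (max{p/p', q/q'}·s)-Gevrey series with coefficients in the Banach space of bounded holomorphic functions on the polydisk. -/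
/-!
If `m < p`, then `n p + m ≤ (n + 1) p` and `((n + 1) p)! ≤ (n!)^p (2^p p^p)^(n + 1)`, so
`((n p + m)!)^(s/p') ≤ D^(n + 1) (n!)^(σ s)`; symmetrically when `j < q`. Hence the Gevrey
bound gives `‖a_{np+m, nq+j}‖ ≤ C Bⁿ (n!)^(σ s) A^(m + j)` on the index set of `f_n`, and on
the polydisk of radius `1 / (2A)` the series of `f_n` and of its termwise derivatives are
dominated by `Σ 2^-(m+j)` and `Σ (m + j) 2^-(m+j)`.
-/

open Filter
open scoped Topology

noncomputable section

variable {E : Type*} [NormedAddCommGroup E] [NormedSpace ℂ E] [CompleteSpace E]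

open Nat

theorem Nat.factorial_add_le_factorial_mul_pow (a b : ℕ) : (a + b)! ≤ a ! * (a + b) ^ b := by
  calc (a + b)! = a ! * (a + b).descFactorial b := by
        rw [← factorial_mul_descFactorial (Nat.le_add_left b a), Nat.add_sub_cancel]
    _ ≤ a ! * (a + b) ^ b := Nat.mul_le_mul_left _ (descFactorial_le_pow _ _)

theorem Nat.factorial_mul_le (n p : ℕ) : (n * p)! ≤ n ! ^ p * (p ^ p) ^ n := by
  induction n with
  | zero => simp
  | succ n ih =>
    calc ((n + 1) * p)! ≤ (n * p)! * ((n + 1) * p) ^ p := by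
          simpa only [Nat.succ_mul] using factorial_add_le_factorial_mul_pow (n * p) p
      _ ≤ n ! ^ p * (p ^ p) ^ n * ((n + 1) * p) ^ p := by gcongr
      _ = (n + 1)! ^ p * (p ^ p) ^ (n + 1) := by
          rw [factorial_succ, mul_pow (n + 1) p, mul_pow (n + 1)]; ring

theorem Nat.factorial_mul_add_le {m p : ℕ} (hm : m ≤ p) (n : ℕ) :
    (n * p + m)! ≤ n ! ^ p * (2 ^ p * p ^ p) ^ (n + 1) := by
  have hsucc : (n + 1)! ≤ n ! * 2 ^ n := by
    rw [factorial_succ, mul_comm]; exact Nat.mul_le_mul_left _ Nat.lt_two_pow_self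
  calc (n * p + m)! ≤ ((n + 1) * p)! := factorial_le (by rw [Nat.succ_mul]; omega)
    _ ≤ (n + 1)! ^ p * (p ^ p) ^ (n + 1) := factorial_mul_le _ _
    _ ≤ (n ! * 2 ^ n) ^ p * (p ^ p) ^ (n + 1) := by gcongr
    _ = n ! ^ p * (2 ^ p) ^ n * (p ^ p) ^ (n + 1) := by ring
    _ ≤ n ! ^ p * (2 ^ p) ^ (n + 1) * (p ^ p) ^ (n + 1) := by
        gcongr
        · exact Nat.one_le_two_pow
        · omega
    _ = n ! ^ p * (2 ^ p * p ^ p) ^ (n + 1) := by ring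

theorem factorial_mul_add_rpow_le {m p : ℕ} {t σ : ℝ} (ht : 0 ≤ t) (hσ : p * t ≤ σ)
    (hm : m ≤ p) (n : ℕ) :
    ((n * p + m)! : ℝ) ^ t ≤ (n ! : ℝ) ^ σ * (((2 ^ p * p ^ p : ℕ) : ℝ) ^ t) ^ (n + 1) := by
  have hnat : ((n * p + m)! : ℝ) ≤ (n ! : ℝ) ^ p * ((2 ^ p * p ^ p : ℕ) : ℝ) ^ (n + 1) := by
    exact_mod_cast factorial_mul_add_le hm n
  calc ((n * p + m)! : ℝ) ^ t
      ≤ ((n ! : ℝ) ^ p * ((2 ^ p * p ^ p : ℕ) : ℝ) ^ (n + 1)) ^ t := by gcongr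
    _ = (n ! : ℝ) ^ (p * t) * (((2 ^ p * p ^ p : ℕ) : ℝ) ^ t) ^ (n + 1) := by
        rw [Real.mul_rpow (by positivity) (by positivity), Real.rpow_natCast_mul (by positivity),
          Real.rpow_pow_comm (by positivity)]
    _ ≤ (n ! : ℝ) ^ σ * (((2 ^ p * p ^ p : ℕ) : ℝ) ^ t) ^ (n + 1) := by
        gcongr
        exact_mod_cast n.factorial_pos

theorem MonomialGevrey.exists_norm_mul_pow_le {F : Type*} [NormedAddCommGroup F] {s : ℝ}
    {p' q' : ℕ} {a : ℕ → ℕ → F} (hgev : MonomialGevrey s p' q' a) (hs : 0 ≤ s) (p q : ℕ) :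
    ∃ ρ C B : ℝ, 0 < ρ ∧ 0 < C ∧ 0 < B ∧ ∀ n m j : ℕ, m < p ∨ j < q →
      ‖a (n * p + m) (n * q + j)‖ * ρ ^ (m + j) ≤
        C * B ^ n * (n ! : ℝ) ^ (max ((p : ℝ) / p') ((q : ℝ) / q') * s) := by
  obtain ⟨C, A, hC, hA, ha⟩ := hgev
  set σ := max ((p : ℝ) / p') ((q : ℝ) / q')
  set D := max (((2 ^ p * p ^ p : ℕ) : ℝ) ^ (s / p')) (((2 ^ q * q ^ q : ℕ) : ℝ) ^ (s / q'))
  have hD : 1 ≤ D := by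
    refine le_max_of_le_left (Real.one_le_rpow ?_ (by positivity))
    exact Nat.one_le_cast.mpr (Nat.mul_pos (Nat.two_pow_pos p) Nat.pow_self_pos)
  have hmin : ∀ n m j : ℕ, m < p ∨ j < q →
      min (((n * p + m)! : ℝ) ^ (s / p')) (((n * q + j)! : ℝ) ^ (s / q')) ≤
        (n ! : ℝ) ^ (σ * s) * D ^ (n + 1) := by
    have hp : (p : ℝ) * (s / p') ≤ σ * s := by
      rw [← mul_div_assoc, mul_div_right_comm]
      exact mul_le_mul_of_nonneg_right (le_max_left _ _) hs
    have hq : (q : ℝ) * (s / q') ≤ σ * s := by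
      rw [← mul_div_assoc, mul_div_right_comm]
      exact mul_le_mul_of_nonneg_right (le_max_right _ _) hs
    rintro n m j (hm | hj)
    · refine (min_le_left _ _).trans
        ((factorial_mul_add_rpow_le (by positivity) hp hm.le n).trans ?_)
      gcongr; exact le_max_left _ _
    · refine (min_le_right _ _).trans
        ((factorial_mul_add_rpow_le (by positivity) hq hj.le n).trans ?_)
      gcongr; exact le_max_right _ _
  refine ⟨A⁻¹, C * D, A ^ (p + q) * D, by positivity, by positivity, by positivity,
    fun n m j hmj => ?_⟩
  calc ‖a (n * p + m) (n * q + j)‖ * A⁻¹ ^ (m + j)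
      ≤ C * A ^ (n * p + m + (n * q + j)) *
          min (((n * p + m)! : ℝ) ^ (s / p')) (((n * q + j)! : ℝ) ^ (s / q')) * A⁻¹ ^ (m + j) := by
        gcongr; exact ha _ _
    _ = C * (A ^ (p + q)) ^ n *
          min (((n * p + m)! : ℝ) ^ (s / p')) (((n * q + j)! : ℝ) ^ (s / q')) := by
        rw [show n * p + m + (n * q + j) = (p + q) * n + (m + j) by ring, pow_add, pow_mul,
          inv_pow]
        field_simp
    _ ≤ C * (A ^ (p + q)) ^ n * ((n ! : ℝ) ^ (σ * s) * D ^ (n + 1)) := by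
        gcongr; exact hmin n m j hmj
    _ = C * D * (A ^ (p + q) * D) ^ n * (n ! : ℝ) ^ (σ * s) := by ring

theorem summable_inv_two_pow : Summable fun n : ℕ => (2⁻¹ : ℝ) ^ n :=
  summable_geometric_of_lt_one (by norm_num) (by norm_num)

theorem summable_inv_two_pow_add : Summable fun i : ℕ × ℕ => (2⁻¹ : ℝ) ^ (i.1 + i.2) := by
  simpa only [pow_add] using summable_inv_two_pow.mul_of_nonneg summable_inv_two_pow
    (fun _ => by positivity) (fun _ => by positivity)

theorem tsum_inv_two_pow_add : ∑' i : ℕ × ℕ, (2⁻¹ : ℝ) ^ (i.1 + i.2) = 4 := by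
  have h := summable_inv_two_pow.norm
  simp only [pow_add]
  rw [← tsum_mul_tsum_of_summable_norm h h, tsum_geometric_inv_two]
  norm_num

theorem summable_add_mul_inv_two_pow_add :
    Summable fun i : ℕ × ℕ => ((i.1 + i.2 : ℕ) : ℝ) * (2⁻¹ : ℝ) ^ (i.1 + i.2) := by
  have h₁ : Summable fun n : ℕ => (n : ℝ) * (2⁻¹ : ℝ) ^ n := by
    simpa using summable_pow_mul_geometric_of_norm_lt_one (R := ℝ) 1 (by norm_num : ‖(2⁻¹ : ℝ)‖ < 1)
  have hl := h₁.mul_of_nonneg summable_inv_two_pow (fun _ => by positivity) (fun _ => by positivity)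
  have hr := summable_inv_two_pow.mul_of_nonneg h₁ (fun _ => by positivity) (fun _ => by positivity)
  convert hl.add hr using 2 with i
  push_cast
  ring

theorem norm_pow_mul_natCast_mul_pow_sub_one_mul_le {z w : ℂ} {r : ℝ} (hz : ‖z‖ ≤ r)
    (hw : ‖w‖ ≤ r) (m j : ℕ) : ‖z ^ m * (j * w ^ (j - 1))‖ * r ≤ j * r ^ (m + j) := by
  cases j with
  | zero => simp
  | succ j =>
    have hr : 0 ≤ r := (norm_nonneg _).trans hz
    rw [norm_mul, norm_mul, norm_pow, norm_pow, Complex.norm_natCast, Nat.add_sub_cancel]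
    calc ‖z‖ ^ m * ((j + 1 : ℕ) * ‖w‖ ^ j) * r ≤ r ^ m * ((j + 1 : ℕ) * r ^ j) * r := by gcongr
      _ = (j + 1 : ℕ) * r ^ (m + (j + 1)) := by ring

section MonomialSeries

variable {F : Type*} [NormedAddCommGroup F] [NormedSpace ℂ F]

def monomialTerm (b : ℕ × ℕ → F) (i : ℕ × ℕ) (x : ℂ × ℂ) : F := (x.1 ^ i.1 * x.2 ^ i.2) • b i

def monomialTermFDeriv (b : ℕ × ℕ → F) (i : ℕ × ℕ) (x : ℂ × ℂ) : ℂ × ℂ →L[ℂ] F :=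
  (x.1 ^ i.1 • ((i.2 * x.2 ^ (i.2 - 1) : ℂ) • ContinuousLinearMap.snd ℂ ℂ ℂ) +
    x.2 ^ i.2 • ((i.1 * x.1 ^ (i.1 - 1) : ℂ) • ContinuousLinearMap.fst ℂ ℂ ℂ)).smulRight (b i)

theorem hasFDerivAt_monomialTerm (b : ℕ × ℕ → F) (i : ℕ × ℕ) (x : ℂ × ℂ) :
    HasFDerivAt (monomialTerm b i) (monomialTermFDeriv b i x) x :=
  (((hasDerivAt_pow i.1 x.1).comp_hasFDerivAt x hasFDerivAt_fst).mul
    ((hasDerivAt_pow i.2 x.2).comp_hasFDerivAt x hasFDerivAt_snd)).smul_const (b i)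

-- Stated after multiplying by `r`, so that no exponent `i.1 + i.2 - 1` appears.
theorem norm_monomialTermFDeriv_mul_le (b : ℕ × ℕ → F) (i : ℕ × ℕ) {x : ℂ × ℂ} {r : ℝ}
    (hx₁ : ‖x.1‖ ≤ r) (hx₂ : ‖x.2‖ ≤ r) :
    ‖monomialTermFDeriv b i x‖ * r ≤ (i.1 + i.2 : ℕ) * r ^ (i.1 + i.2) * ‖b i‖ := by
  have hr : 0 ≤ r := (norm_nonneg _).trans hx₁
  have hsmul : ∀ (c : ℂ) (L : ℂ × ℂ →L[ℂ] ℂ), ‖L‖ ≤ 1 → ‖c • L‖ * r ≤ ‖c‖ * r :=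
    fun c L hL => by
      gcongr
      exact (norm_smul_le c L).trans (mul_le_of_le_one_right (norm_nonneg _) hL)
  rw [monomialTermFDeriv, ContinuousLinearMap.norm_smulRight_apply, smul_smul, smul_smul]
  calc ‖(x.1 ^ i.1 * (i.2 * x.2 ^ (i.2 - 1))) • ContinuousLinearMap.snd ℂ ℂ ℂ +
          (x.2 ^ i.2 * (i.1 * x.1 ^ (i.1 - 1))) • ContinuousLinearMap.fst ℂ ℂ ℂ‖ * ‖b i‖ * r
      ≤ (‖(x.1 ^ i.1 * (i.2 * x.2 ^ (i.2 - 1))) • ContinuousLinearMap.snd ℂ ℂ ℂ‖ * r +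
          ‖(x.2 ^ i.2 * (i.1 * x.1 ^ (i.1 - 1))) • ContinuousLinearMap.fst ℂ ℂ ℂ‖ * r) * ‖b i‖ := by
        rw [mul_right_comm, ← add_mul]
        gcongr
        exact norm_add_le _ _
    _ ≤ (i.2 * r ^ (i.1 + i.2) + i.1 * r ^ (i.2 + i.1)) * ‖b i‖ := by
        refine mul_le_mul_of_nonneg_right (add_le_add ?_ ?_) (norm_nonneg _)
        · exact (hsmul _ _ (ContinuousLinearMap.norm_snd_le ℂ ℂ ℂ)).trans
            (norm_pow_mul_natCast_mul_pow_sub_one_mul_le hx₁ hx₂ _ _)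
        · exact (hsmul _ _ (ContinuousLinearMap.norm_fst_le ℂ ℂ ℂ)).trans
            (norm_pow_mul_natCast_mul_pow_sub_one_mul_le hx₂ hx₁ _ _)
    _ = (i.1 + i.2 : ℕ) * r ^ (i.1 + i.2) * ‖b i‖ := by
        rw [add_comm i.2 i.1]; push_cast; ring

variable {S : Set (ℕ × ℕ)} {b : ℕ × ℕ → F} {ρ K : ℝ} {x : ℂ × ℂ}

theorem norm_monomialTerm_le {i : ℕ × ℕ} (hb : ‖b i‖ * ρ ^ (i.1 + i.2) ≤ K)
    (hx₁ : ‖x.1‖ ≤ ρ / 2) (hx₂ : ‖x.2‖ ≤ ρ / 2) :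
    ‖monomialTerm b i x‖ ≤ K * 2⁻¹ ^ (i.1 + i.2) := by
  have hρ : 0 ≤ ρ / 2 := (norm_nonneg _).trans hx₁
  calc ‖monomialTerm b i x‖ = ‖x.1‖ ^ i.1 * ‖x.2‖ ^ i.2 * ‖b i‖ := by
        rw [monomialTerm, norm_smul, norm_mul, norm_pow, norm_pow]
    _ ≤ (ρ / 2) ^ i.1 * (ρ / 2) ^ i.2 * ‖b i‖ := by gcongr
    _ = ‖b i‖ * ρ ^ (i.1 + i.2) * 2⁻¹ ^ (i.1 + i.2) := by ring
    _ ≤ K * 2⁻¹ ^ (i.1 + i.2) := by gcongr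

theorem norm_monomialTermFDeriv_le (hρ : 0 < ρ) {i : ℕ × ℕ} (hb : ‖b i‖ * ρ ^ (i.1 + i.2) ≤ K)
    (hx₁ : ‖x.1‖ ≤ ρ / 2) (hx₂ : ‖x.2‖ ≤ ρ / 2) :
    ‖monomialTermFDeriv b i x‖ ≤ 2 * K / ρ * ((i.1 + i.2 : ℕ) * 2⁻¹ ^ (i.1 + i.2)) := by
  have hmul := norm_monomialTermFDeriv_mul_le b i hx₁ hx₂
  calc ‖monomialTermFDeriv b i x‖
      ≤ (i.1 + i.2 : ℕ) * (ρ / 2) ^ (i.1 + i.2) * ‖b i‖ / (ρ / 2) :=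
        (le_div_iff₀ (half_pos hρ)).mpr hmul
    _ = (i.1 + i.2 : ℕ) * 2⁻¹ ^ (i.1 + i.2) * (‖b i‖ * ρ ^ (i.1 + i.2)) / (ρ / 2) := by ring
    _ ≤ (i.1 + i.2 : ℕ) * 2⁻¹ ^ (i.1 + i.2) * K / (ρ / 2) := by gcongr
    _ = 2 * K / ρ * ((i.1 + i.2 : ℕ) * 2⁻¹ ^ (i.1 + i.2)) := by field_simp

theorem summable_monomialTerm [CompleteSpace F] (hb : ∀ i ∈ S, ‖b i‖ * ρ ^ (i.1 + i.2) ≤ K)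
    (hx₁ : ‖x.1‖ ≤ ρ / 2) (hx₂ : ‖x.2‖ ≤ ρ / 2) :
    Summable fun i : S => monomialTerm b i x :=
  .of_norm_bounded ((summable_inv_two_pow_add.mul_left K).subtype S)
    fun i => norm_monomialTerm_le (hb i i.2) hx₁ hx₂

theorem norm_tsum_monomialTerm_le (hK : 0 ≤ K) (hb : ∀ i ∈ S, ‖b i‖ * ρ ^ (i.1 + i.2) ≤ K)
    (hx₁ : ‖x.1‖ ≤ ρ / 2) (hx₂ : ‖x.2‖ ≤ ρ / 2) :
    ‖∑' i : S, monomialTerm b i x‖ ≤ 4 * K := by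
  have hmaj := summable_inv_two_pow_add.mul_left K
  calc ‖∑' i : S, monomialTerm b i x‖ ≤ ∑' i : S, K * 2⁻¹ ^ (i.1.1 + i.1.2) :=
        tsum_of_norm_bounded (hmaj.subtype S).hasSum
          fun i => norm_monomialTerm_le (hb i i.2) hx₁ hx₂
    _ ≤ ∑' i : ℕ × ℕ, K * 2⁻¹ ^ (i.1 + i.2) := hmaj.tsum_subtype_le _ S fun _ => by positivity
    _ = 4 * K := by rw [tsum_mul_left, tsum_inv_two_pow_add, mul_comm]

theorem differentiableOn_tsum_monomialTerm [CompleteSpace F] (hρ : 0 < ρ)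
    (hb : ∀ i ∈ S, ‖b i‖ * ρ ^ (i.1 + i.2) ≤ K) :
    DifferentiableOn ℂ (fun x => ∑' i : S, monomialTerm b i x)
      {x : ℂ × ℂ | ‖x.1‖ < ρ / 2 ∧ ‖x.2‖ < ρ / 2} := by
  have hball : {x : ℂ × ℂ | ‖x.1‖ < ρ / 2 ∧ ‖x.2‖ < ρ / 2} = Metric.ball 0 (ρ / 2) := by
    ext x; simp [Prod.norm_def]
  have hle : ∀ y ∈ Metric.ball (0 : ℂ × ℂ) (ρ / 2), ‖y.1‖ ≤ ρ / 2 ∧ ‖y.2‖ ≤ ρ / 2 := by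
    intro y hy
    rw [← hball] at hy
    exact ⟨hy.1.le, hy.2.le⟩
  rw [hball]
  intro x hx
  refine (hasFDerivAt_tsum_of_isPreconnected
    ((summable_add_mul_inv_two_pow_add.mul_left (2 * K / ρ)).subtype S) Metric.isOpen_ball
    (convex_ball _ _).isPreconnected (fun i y _ => hasFDerivAt_monomialTerm b i.1 y)
    (fun i y hy => norm_monomialTermFDeriv_le hρ (hb i.1 i.2) (hle y hy).1 (hle y hy).2) hx
    (summable_monomialTerm hb (hle x hx).1 (hle x hx).2) hx).differentiableAt.differentiableWithinAt

end MonomialSeries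

theorem hatT_gevrey_of_monomialGevrey_general
    (p q p' q' : ℕ)
    (s : ℝ) (hs : 0 ≤ s) (a : ℕ → ℕ → E)
    (hgev : MonomialGevrey s p' q' a) :
    ∃ r C A : ℝ, 0 < r ∧ 0 < C ∧ 0 < A ∧ ∀ n : ℕ,
      (∀ x : ℂ × ℂ, ‖x.1‖ ≤ r → ‖x.2‖ ≤ r →
        Summable fun mj : coeffIndex p q =>
          (x.1 ^ mj.1.1 * x.2 ^ mj.1.2) • a (n * p + mj.1.1) (n * q + mj.1.2)) ∧
      DifferentiableOn ℂ (coeffFn a p q n)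
        {x : ℂ × ℂ | ‖x.1‖ < r ∧ ‖x.2‖ < r} ∧
      (∀ x : ℂ × ℂ, ‖x.1‖ ≤ r → ‖x.2‖ ≤ r →
        ‖coeffFn a p q n x‖ ≤
          C * A ^ n * (n.factorial : ℝ) ^ (max ((p : ℝ) / (p' : ℝ)) ((q : ℝ) / (q' : ℝ)) * s)) := by
  obtain ⟨ρ, C, B, hρ, hC, hB, hcoef⟩ := hgev.exists_norm_mul_pow_le hs p q
  refine ⟨ρ / 2, 4 * C, B, half_pos hρ, by positivity, hB, fun n => ?_⟩
  have hb : ∀ i ∈ coeffIndex p q, ‖a (n * p + i.1) (n * q + i.2)‖ * ρ ^ (i.1 + i.2) ≤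
      C * B ^ n * (n ! : ℝ) ^ (max ((p : ℝ) / p') ((q : ℝ) / q') * s) :=
    fun i hi => hcoef n i.1 i.2 hi
  refine ⟨fun x hx₁ hx₂ => ?_, ?_, fun x hx₁ hx₂ => ?_⟩
  · exact summable_monomialTerm (b := fun i => a (n * p + i.1) (n * q + i.2)) hb hx₁ hx₂
  · exact differentiableOn_tsum_monomialTerm (b := fun i => a (n * p + i.1) (n * q + i.2)) hρ hb
  · calc ‖coeffFn a p q n x‖
        ≤ 4 * (C * B ^ n * (n ! : ℝ) ^ (max ((p : ℝ) / p') ((q : ℝ) / q') * s)) :=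
          norm_tsum_monomialTerm_le (b := fun i => a (n * p + i.1) (n * q + i.2)) (by positivity)
            hb hx₁ hx₂
      _ = _ := by ring

/-- **Lemma.** If `f̂` is `s`-Gevrey in `x₁^{p'} x₂^{q'}`, then `T̂_{p,q} f̂` is a
`(max (p/p') (q/q') · s)`-Gevrey series with coefficients bounded holomorphic functions
on a polydisk: the `(p,q)`-coefficient functions `f_n` converge and satisfy
`‖f_n‖_r ≤ C Aⁿ (n!)^{σ s}` with `σ = max (p/p') (q/q')`. -/
theorem hatT_gevrey_of_monomialGevrey
    (p q p' q' : ℕ) (hp : 0 < p) (hq : 0 < q) (hp' : 0 < p') (hq' : 0 < q')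
    (s : ℝ) (hs : 0 ≤ s) (a : ℕ → ℕ → E)
    (hgev : MonomialGevrey s p' q' a) :
    ∃ r C A : ℝ, 0 < r ∧ 0 < C ∧ 0 < A ∧ ∀ n : ℕ,
      (∀ x : ℂ × ℂ, ‖x.1‖ ≤ r → ‖x.2‖ ≤ r →
        Summable fun mj : coeffIndex p q =>
          (x.1 ^ mj.1.1 * x.2 ^ mj.1.2) • a (n * p + mj.1.1) (n * q + mj.1.2)) ∧
      DifferentiableOn ℂ (coeffFn a p q n)
        {x : ℂ × ℂ | ‖x.1‖ < r ∧ ‖x.2‖ < r} ∧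
      (∀ x : ℂ × ℂ, ‖x.1‖ ≤ r → ‖x.2‖ ≤ r →
        ‖coeffFn a p q n x‖ ≤
          C * A ^ n * (n.factorial : ℝ) ^ (max ((p : ℝ) / (p' : ℝ)) ((q : ℝ) / (q' : ℝ)) * s)) :=
  hatT_gevrey_of_monomialGevrey_general p q p' q' s hs a hgev
end
end

section
/- For every integer l ≥ 2, the sequence ((n·l)!)^{1/l} / (lⁿ · n!) tends to 0 as n → ∞. -/
open Filter

lemma fact_add_le (m k : ℕ) : (m + (k+1)).factorial ≤ (m+1) * (m+k+1)^k * m.factorial := by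
  induction k with
  | zero => simp [Nat.factorial_succ]
  | succ k ih =>
      have h1 : (m + (k+2)).factorial = (m + k + 2) * (m + (k+1)).factorial := by
        rw [show m + (k+2) = (m + (k+1)) + 1 by ring, Nat.factorial_succ]
        ring_nf
      rw [h1]
      calc (m + k + 2) * (m + (k+1)).factorial
          ≤ (m + k + 2) * ((m+1) * (m+k+1)^k * m.factorial) := Nat.mul_le_mul_left _ ih
        _ ≤ (m+1) * (m+k+2)^(k+1) * m.factorial := by
            have : (m+k+2) * (m+k+1)^k ≤ (m+k+2)^(k+1) := by
              rw [pow_succ']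
              exact Nat.mul_le_mul_left _ (Nat.pow_le_pow_left (by omega) k)
            calc (m + k + 2) * ((m+1) * (m+k+1)^k * m.factorial)
                = (m+1) * ((m+k+2) * (m+k+1)^k) * m.factorial := by ring
              _ ≤ (m+1) * (m+k+2)^(k+1) * m.factorial :=
                  Nat.mul_le_mul_right _ (Nat.mul_le_mul_left _ this)

lemma nat_key (k n : ℕ) :
    ((n+1)*(k+2)).factorial * ((k+2)^(n*(k+2)) * n.factorial^(k+2) * (2*n+2)) ≤
    (n*(k+2)).factorial * (2*n+1) * ((k+2)^((n+1)*(k+2)) * ((n+1).factorial)^(k+2)) := by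
  set m := n*(k+2) with hm
  have h1 : ((n+1)*(k+2)).factorial ≤ (m+1) * (m+k+2)^(k+1) * m.factorial := by
    have h := fact_add_le m (k+1)
    rw [show m + (k+1+1) = (n+1)*(k+2) by rw [hm]; ring,
        show m + (k+1) + 1 = m+k+2 by ring] at h
    exact h
  have h2 : (m+1)*(2*n+2) ≤ (2*n+1)*(m+k+2) := by
    rw [hm]; nlinarith [Nat.zero_le (n*k), Nat.zero_le k]
  have hQ : (k+2)^((n+1)*(k+2)) * ((n+1).factorial)^(k+2)
      = (k+2)^m * n.factorial^(k+2) * (m+k+2)^(k+1) * (m+k+2) := by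
    have h3 : (m+k+2)^(k+1) * (m+k+2) = ((k+2)*(n+1))^(k+2) := by
      rw [← pow_succ]; congr 1; rw [hm]; ring
    rw [Nat.factorial_succ, show (n+1)*(k+2) = m + (k+2) by rw [hm]; ring, pow_add,
        mul_pow, mul_assoc, mul_assoc, h3, mul_pow]
    ring
  calc ((n+1)*(k+2)).factorial * ((k+2)^m * n.factorial^(k+2) * (2*n+2))
      ≤ ((m+1) * (m+k+2)^(k+1) * m.factorial) * ((k+2)^m * n.factorial^(k+2) * (2*n+2)) :=
        Nat.mul_le_mul_right _ h1
    _ = m.factorial * ((k+2)^m * n.factorial^(k+2)) * (m+k+2)^(k+1) * ((m+1) * (2*n+2)) := by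
        ring
    _ ≤ m.factorial * ((k+2)^m * n.factorial^(k+2)) * (m+k+2)^(k+1) * ((2*n+1)*(m+k+2)) :=
        Nat.mul_le_mul_left _ h2
    _ = m.factorial * (2*n+1) * ((k+2)^((n+1)*(k+2)) * ((n+1).factorial)^(k+2)) := by
        rw [hQ]; ring

lemma b_step (l n : ℕ) (hl : 2 ≤ l) :
    (((n+1)*l).factorial : ℝ) / ((l:ℝ)^((n+1)*l) * (((n+1).factorial : ℝ))^l)
      ≤ ((n*l).factorial : ℝ) / ((l:ℝ)^(n*l) * ((n.factorial : ℝ))^l)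
        * ((2*(n:ℝ)+1)/(2*(n:ℝ)+2)) := by
  obtain ⟨k, rfl⟩ : ∃ k, l = k + 2 := ⟨l - 2, by omega⟩
  have hd1 : (0:ℝ) < ((k+2:ℕ):ℝ)^((n+1)*(k+2)) * (((n+1).factorial : ℝ))^(k+2) := by
    positivity
  have hd2 : (0:ℝ) < ((k+2:ℕ):ℝ)^(n*(k+2)) * ((n.factorial : ℝ))^(k+2) * (2*(n:ℝ)+2) := by
    positivity
  rw [div_mul_div_comm, div_le_div_iff₀ hd1 hd2]
  have h := nat_key k n
  have h' : ((((n+1)*(k+2)).factorial * ((k+2)^(n*(k+2)) * n.factorial^(k+2) * (2*n+2)) : ℕ) : ℝ)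
      ≤ (((n*(k+2)).factorial * (2*n+1) * ((k+2)^((n+1)*(k+2)) * ((n+1).factorial)^(k+2)) : ℕ) : ℝ) :=
    Nat.cast_le.mpr h
  push_cast at h' ⊢
  linarith [h']

lemma b_sq_le (l : ℕ) (hl : 2 ≤ l) (n : ℕ) :
    (((n*l).factorial : ℝ) / ((l:ℝ)^(n*l) * ((n.factorial : ℝ))^l))^2 ≤ 1/(2*(n:ℝ)+1) := by
  induction n with
  | zero => simp
  | succ n ih =>
      have hstep := b_step l n hl
      have hB' : (0:ℝ) ≤ (((n+1)*l).factorial : ℝ) / ((l:ℝ)^((n+1)*l) * (((n+1).factorial : ℝ))^l) := by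
        positivity
      have key : ((((n+1)*l).factorial : ℝ) / ((l:ℝ)^((n+1)*l) * (((n+1).factorial : ℝ))^l))^2
          ≤ (((n*l).factorial : ℝ) / ((l:ℝ)^(n*l) * ((n.factorial : ℝ))^l))^2
            * ((2*(n:ℝ)+1)/(2*(n:ℝ)+2))^2 := by
        rw [← mul_pow]
        exact pow_le_pow_left₀ hB' hstep 2
      have h2 : (((n*l).factorial : ℝ) / ((l:ℝ)^(n*l) * ((n.factorial : ℝ))^l))^2
            * ((2*(n:ℝ)+1)/(2*(n:ℝ)+2))^2
          ≤ (1/(2*(n:ℝ)+1)) * ((2*(n:ℝ)+1)/(2*(n:ℝ)+2))^2 :=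
        mul_le_mul_of_nonneg_right ih (by positivity)
      have e : (1/(2*(n:ℝ)+1)) * ((2*(n:ℝ)+1)/(2*(n:ℝ)+2))^2
          = (2*(n:ℝ)+1)/((2*(n:ℝ)+2)^2) := by
        field_simp
      have h3 : (1/(2*(n:ℝ)+1)) * ((2*(n:ℝ)+1)/(2*(n:ℝ)+2))^2 ≤ 1/(2*(n:ℝ)+3) := by
        rw [e, div_le_div_iff₀ (by positivity) (by positivity)]
        nlinarith [sq_nonneg ((n:ℝ))]
      refine (key.trans (h2.trans h3)).trans_eq ?_
      push_cast
      ring_nf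

lemma b_tendsto (l : ℕ) (hl : 2 ≤ l) :
    Tendsto (fun n : ℕ => ((n*l).factorial : ℝ) / ((l:ℝ)^(n*l) * ((n.factorial : ℝ))^l))
      atTop (nhds 0) := by
  have hub : ∀ n : ℕ, ((n*l).factorial : ℝ) / ((l:ℝ)^(n*l) * ((n.factorial : ℝ))^l)
      ≤ Real.sqrt (1/((n:ℝ)+1)) := by
    intro n
    apply Real.le_sqrt_of_sq_le
    refine (b_sq_le l hl n).trans ?_
    have h1 : (0:ℝ) < (n:ℝ)+1 := by positivity
    apply div_le_div_of_nonneg_left (by norm_num) h1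
    linarith
  have hnn : ∀ n : ℕ, (0:ℝ) ≤ ((n*l).factorial : ℝ) / ((l:ℝ)^(n*l) * ((n.factorial : ℝ))^l) := by
    intro n; positivity
  have hg : Tendsto (fun n : ℕ => Real.sqrt (1/((n:ℝ)+1))) atTop (nhds 0) := by
    have := (Real.continuous_sqrt.tendsto' 0 0 Real.sqrt_zero).comp
      tendsto_one_div_add_atTop_nhds_zero_nat
    exact this
  exact squeeze_zero hnn hub hg

/-- For every integer `l ≥ 2`, `((n·l)!)^{1/l} / (lⁿ · n!) → 0` as `n → ∞`. -/
theorem tendsto_factorial_rpow_div (l : ℕ) (hl : 2 ≤ l) :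
    Tendsto (fun n : ℕ => ((n * l).factorial : ℝ) ^ ((1 : ℝ) / (l : ℝ)) /
      ((l : ℝ) ^ n * (n.factorial : ℝ))) atTop (nhds 0) := by
  have hl0 : (0:ℝ) < (l:ℝ) := by positivity
  have hlne : l ≠ 0 := by omega
  have hp : (0:ℝ) < (1:ℝ)/(l:ℝ) := by positivity
  have hb := b_tendsto l hl
  have key : Tendsto (fun n : ℕ =>
      (((n*l).factorial : ℝ) / ((l:ℝ)^(n*l) * ((n.factorial : ℝ))^l)) ^ ((1:ℝ)/(l:ℝ)))
      atTop (nhds ((0:ℝ) ^ ((1:ℝ)/(l:ℝ)))) :=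
    hb.rpow_const (Or.inr hp.le)
  rw [Real.zero_rpow hp.ne'] at key
  refine key.congr (fun n => ?_)
  have hden : (0:ℝ) ≤ (l:ℝ)^(n*l) * ((n.factorial : ℝ))^l := by positivity
  rw [Real.div_rpow (by positivity) hden,
      Real.mul_rpow (by positivity) (by positivity)]
  congr 2
  · rw [one_div, show (l:ℝ)^(n*l) = ((l:ℝ)^n)^l by rw [← pow_mul],
      Real.pow_rpow_inv_natCast (by positivity) hlne]
  · rw [one_div, Real.pow_rpow_inv_natCast (by positivity) hlne]
end
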